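/- arXiv:2411.07180 — 4 statements merged into one kernel-verified Lean document; each statement's English description precedes it below -/
import Mathlib

section
/- Let φ ∈ ℝ^M and let Y₁,…,Y_M be i.i.d. standard Gumbel. Conditioned on the event {argmax_m (φ_m + Y_m) = k}, the perturbed maximum value φ_k + Y_k has the same distribution as the unconditioned maximum max_m (φ_m + Y_m), namely Gumbel with location log Σ_m exp(φ_m). -/
/-!
Realise the standard Gumbel law as the image of the uniform law on `(0, 1)` under the quantile
`u ↦ -log (-log u)` of its CDF `F x = exp (-exp (-x))`; then `∫_{y ≤ t} F(y)^(c-1) dF(y) = F(t)^c / c`.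
Since `F (y - a) = F y ^ exp a`, splitting off the coordinate `k` and using independence gives,
with `c = ∑ m, exp (φ m - φ k)`,
  `P(argmax = k, Y k ≤ t) = ∫_{y ≤ t} ∏_{m ≠ k} F (y - (φ m - φ k)) dF(y) = F(t)^c / c`.
So `P(argmax = k) = 1 / c`, and the conditional CDF of `Y k` is `F(t)^c = F(t - log c)`;
at `t = x - φ k` the location `φ k + log c` is `log ∑ m, exp (φ m)`.
-/

open MeasureTheory ProbabilityTheory Set

noncomputable section

def gumbelCDF (x : ℝ) : ℝ := Real.exp (-Real.exp (-x))

def gumbelQuantile (u : ℝ) : ℝ := -Real.log (-Real.log u)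

lemma gumbelCDF_pos (x : ℝ) : 0 < gumbelCDF x := Real.exp_pos _

lemma gumbelCDF_lt_one (x : ℝ) : gumbelCDF x < 1 :=
  Real.exp_lt_one_iff.2 (neg_lt_zero.2 (Real.exp_pos _))

lemma strictMono_gumbelCDF : StrictMono gumbelCDF := fun x y hxy => by
  unfold gumbelCDF
  gcongr

lemma continuous_gumbelCDF : Continuous gumbelCDF := by
  unfold gumbelCDF
  fun_prop

lemma measurable_gumbelQuantile : Measurable gumbelQuantile := by
  unfold gumbelQuantile
  fun_prop

lemma gumbelCDF_gumbelQuantile {u : ℝ} (hu : u ∈ Ioo 0 1) :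
    gumbelCDF (gumbelQuantile u) = u := by
  have hlog : 0 < -Real.log u := neg_pos.2 (Real.log_neg hu.1 hu.2)
  rw [gumbelCDF, gumbelQuantile, neg_neg, Real.exp_log hlog, neg_neg, Real.exp_log hu.1]

lemma gumbelQuantile_le_iff {u : ℝ} (hu : u ∈ Ioo 0 1) (x : ℝ) :
    gumbelQuantile u ≤ x ↔ u ≤ gumbelCDF x := by
  rw [← strictMono_gumbelCDF.le_iff_le, gumbelCDF_gumbelQuantile hu]

lemma gumbelQuantile_lt_iff {u : ℝ} (hu : u ∈ Ioo 0 1) (x : ℝ) :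
    gumbelQuantile u < x ↔ u < gumbelCDF x := by
  rw [← strictMono_gumbelCDF.lt_iff_lt, gumbelCDF_gumbelQuantile hu]

lemma gumbelCDF_rpow (x c : ℝ) : gumbelCDF x ^ c = Real.exp (-(c * Real.exp (-x))) := by
  rw [gumbelCDF, ← Real.exp_mul]
  ring_nf

lemma gumbelCDF_rpow_eq_gumbelCDF_sub_log {c : ℝ} (hc : 0 < c) (x : ℝ) :
    gumbelCDF x ^ c = gumbelCDF (x - Real.log c) := by
  rw [gumbelCDF_rpow, gumbelCDF, show -(x - Real.log c) = Real.log c + -x by ring, Real.exp_add,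
    Real.exp_log hc]

lemma prod_gumbelCDF_sub {ι : Type*} [Fintype ι] (a : ι → ℝ) (x : ℝ) :
    ∏ j, gumbelCDF (x - a j) = gumbelCDF x ^ ∑ j, Real.exp (a j) := by
  rw [gumbelCDF_rpow, Finset.sum_mul, ← Finset.sum_neg_distrib, Real.exp_sum]
  refine Finset.prod_congr rfl fun j _ => ?_
  rw [gumbelCDF, show -(x - a j) = a j + -x by ring, Real.exp_add]

def gumbelMeasure : Measure ℝ := (volume.restrict (Ioo 0 1)).map gumbelQuantile

instance : IsProbabilityMeasure gumbelMeasure :=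
  haveI : IsProbabilityMeasure (volume.restrict (Ioo (0 : ℝ) 1)) := ⟨by simp⟩
  Measure.isProbabilityMeasure_map measurable_gumbelQuantile.aemeasurable

lemma gumbelMeasure_apply {s : Set ℝ} (hs : MeasurableSet s) :
    gumbelMeasure s = volume (gumbelQuantile ⁻¹' s ∩ Ioo 0 1) := by
  rw [gumbelMeasure, Measure.map_apply measurable_gumbelQuantile hs,
    Measure.restrict_apply (measurable_gumbelQuantile hs)]

lemma gumbelQuantile_preimage_Iic_inter (x : ℝ) :
    gumbelQuantile ⁻¹' Iic x ∩ Ioo 0 1 = Ioc 0 (gumbelCDF x) := by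
  ext u
  refine ⟨fun ⟨hx, hu⟩ => ⟨hu.1, (gumbelQuantile_le_iff hu x).1 hx⟩, fun ⟨h0, hx⟩ => ?_⟩
  have hu : u ∈ Ioo 0 1 := ⟨h0, hx.trans_lt (gumbelCDF_lt_one x)⟩
  exact ⟨(gumbelQuantile_le_iff hu x).2 hx, hu⟩

lemma gumbelQuantile_preimage_Iio_inter (x : ℝ) :
    gumbelQuantile ⁻¹' Iio x ∩ Ioo 0 1 = Ioo 0 (gumbelCDF x) := by
  ext u
  refine ⟨fun ⟨hx, hu⟩ => ⟨hu.1, (gumbelQuantile_lt_iff hu x).1 hx⟩, fun ⟨h0, hx⟩ => ?_⟩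
  have hu : u ∈ Ioo 0 1 := ⟨h0, hx.trans (gumbelCDF_lt_one x)⟩
  exact ⟨(gumbelQuantile_lt_iff hu x).2 hx, hu⟩

lemma gumbelMeasure_Iic (x : ℝ) : gumbelMeasure (Iic x) = ENNReal.ofReal (gumbelCDF x) := by
  rw [gumbelMeasure_apply measurableSet_Iic, gumbelQuantile_preimage_Iic_inter, Real.volume_Ioc,
    sub_zero]

lemma gumbelMeasure_Iio (x : ℝ) : gumbelMeasure (Iio x) = ENNReal.ofReal (gumbelCDF x) := by
  rw [gumbelMeasure_apply measurableSet_Iio, gumbelQuantile_preimage_Iio_inter, Real.volume_Ioo,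
    sub_zero]

lemma map_eq_gumbelMeasure {Ω : Type*} [MeasurableSpace Ω] {μ : Measure Ω} [IsFiniteMeasure μ]
    {Z : Ω → ℝ} (hZ : Measurable Z)
    (hCDF : ∀ x : ℝ, μ {ω | Z ω ≤ x} = ENNReal.ofReal (Real.exp (-Real.exp (-x)))) :
    μ.map Z = gumbelMeasure :=
  Measure.ext_of_Iic _ _ fun x => by
    rw [Measure.map_apply hZ measurableSet_Iic, gumbelMeasure_Iic]
    exact hCDF x

lemma setLIntegral_rpow_Ioc {c b : ℝ} (hc : 0 < c) (hb : 0 ≤ b) :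
    ∫⁻ u in Ioc 0 b, ENNReal.ofReal (u ^ (c - 1)) = ENNReal.ofReal (b ^ c / c) := by
  have hint : IntegrableOn (fun u : ℝ => u ^ (c - 1)) (Ioc 0 b) :=
    (intervalIntegral.intervalIntegrable_rpow' (by linarith)).1
  rw [← ofReal_integral_eq_lintegral_ofReal hint
      (ae_restrict_of_forall_mem measurableSet_Ioc fun u hu => Real.rpow_nonneg hu.1.le _),
    ← intervalIntegral.integral_of_le hb, integral_rpow (Or.inl (by linarith)), sub_add_cancel,
    Real.zero_rpow hc.ne', sub_zero]

lemma setLIntegral_gumbelCDF_rpow {c : ℝ} {s : Set ℝ} (hs : MeasurableSet s) :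
    ∫⁻ y in s, ENNReal.ofReal (gumbelCDF y ^ (c - 1)) ∂gumbelMeasure
      = ∫⁻ u in gumbelQuantile ⁻¹' s ∩ Ioo 0 1, ENNReal.ofReal (u ^ (c - 1)) := by
  rw [gumbelMeasure, setLIntegral_map hs
    (continuous_gumbelCDF.measurable.pow_const _).ennreal_ofReal measurable_gumbelQuantile,
    Measure.restrict_restrict (measurable_gumbelQuantile hs)]
  exact setLIntegral_congr_fun (measurable_gumbelQuantile hs |>.inter measurableSet_Ioo)
    fun u hu => by rw [gumbelCDF_gumbelQuantile hu.2]

lemma setLIntegral_Iic_gumbelCDF_rpow {c : ℝ} (hc : 0 < c) (x : ℝ) :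
    ∫⁻ y in Iic x, ENNReal.ofReal (gumbelCDF y ^ (c - 1)) ∂gumbelMeasure
      = ENNReal.ofReal (gumbelCDF x ^ c / c) := by
  rw [setLIntegral_gumbelCDF_rpow measurableSet_Iic, gumbelQuantile_preimage_Iic_inter,
    setLIntegral_rpow_Ioc hc (gumbelCDF_pos x).le]

lemma lintegral_gumbelCDF_rpow {c : ℝ} (hc : 0 < c) :
    ∫⁻ y, ENNReal.ofReal (gumbelCDF y ^ (c - 1)) ∂gumbelMeasure = ENNReal.ofReal c⁻¹ := by
  rw [← setLIntegral_univ, setLIntegral_gumbelCDF_rpow MeasurableSet.univ, preimage_univ,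
    univ_inter, setLIntegral_congr Ioo_ae_eq_Ioc, setLIntegral_rpow_Ioc hc zero_le_one,
    Real.one_rpow, one_div]

lemma pi_gumbelMeasure_forall_lt {ι : Type*} [Fintype ι] (a : ι → ℝ) (x : ℝ) :
    (Measure.pi fun _ : ι => gumbelMeasure) {w | ∀ j, w j < x - a j}
      = ENNReal.ofReal (gumbelCDF x ^ ∑ j, Real.exp (a j)) := by
  have hbox : {w : ι → ℝ | ∀ j, w j < x - a j} = univ.pi fun j => Iio (x - a j) := by
    ext w
    simp
  rw [hbox, Measure.pi_pi, ← prod_gumbelCDF_sub,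
    ENNReal.ofReal_prod_of_nonneg fun j _ => (gumbelCDF_pos _).le]
  exact Finset.prod_congr rfl fun j _ => gumbelMeasure_Iio _

lemma pi_gumbelMeasure_argmax_and_mem {n : ℕ} (φ : Fin (n + 1) → ℝ) (k : Fin (n + 1))
    {s : Set ℝ} (hs : MeasurableSet s) :
    (Measure.pi fun _ => gumbelMeasure) {v | (∀ m, m ≠ k → φ m + v m < φ k + v k) ∧ v k ∈ s}
      = ∫⁻ y in s, ENNReal.ofReal (gumbelCDF y ^ (∑ m, Real.exp (φ m - φ k) - 1))
          ∂gumbelMeasure := by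
  set S : Set (ℝ × (Fin n → ℝ)) :=
    {p | (∀ j, p.2 j < p.1 - (φ (k.succAbove j) - φ k)) ∧ p.1 ∈ s}
  have hS : MeasurableSet S := by measurability
  have hpre : {v : Fin (n + 1) → ℝ | (∀ m, m ≠ k → φ m + v m < φ k + v k) ∧ v k ∈ s}
      = MeasurableEquiv.piFinSuccAbove (fun _ => ℝ) k ⁻¹' S := by
    ext v
    simp only [S, Fin.forall_iff_succAbove k, ne_eq, not_true_eq_false, lt_self_iff_false,
      imp_self, Fin.succAbove_ne, not_false_eq_true, forall_const, true_and, mem_ofPred_eq,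
      MeasurableEquiv.piFinSuccAbove_apply, preimage_ofPred_eq, Fin.insertNthEquiv_symm_apply,
      Fin.removeNth_apply, and_congr_left_iff]
    exact fun _ => forall_congr' fun j => by constructor <;> intro h <;> linarith
  have hslice : ∀ y, (Measure.pi fun _ : Fin n => gumbelMeasure) (Prod.mk y ⁻¹' S)
      = s.indicator (fun y => ENNReal.ofReal (gumbelCDF y ^ (∑ m, Real.exp (φ m - φ k) - 1)))
          y := by
    intro y
    by_cases hy : y ∈ s
    · simp only [S, preimage_ofPred_eq, hy, and_true, indicator_of_mem hy]
      rw [pi_gumbelMeasure_forall_lt, Fin.sum_univ_succAbove _ k]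
      simp
    · simp [S, hy]
  rw [hpre, (measurePreserving_piFinSuccAbove (fun _ => gumbelMeasure) k).measure_preimage
    hS.nullMeasurableSet, Measure.prod_apply hS, ← lintegral_indicator hs]
  simp_rw [hslice]

end

theorem gumbel_max_given_argmax_general {Ω : Type*} [MeasureSpace Ω]
    [IsProbabilityMeasure (ℙ : Measure Ω)]
    {M : ℕ} (φ : Fin M → ℝ) (Y : Fin M → Ω → ℝ)
    (hmeas : ∀ m, Measurable (Y m))
    (hindep : iIndepFun Y ℙ)
    (hCDF : ∀ m, ∀ x : ℝ, ℙ {ω | Y m ω ≤ x} = ENNReal.ofReal (Real.exp (-Real.exp (-x))))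
    (k : Fin M) :
    ∀ x : ℝ,
      (ℙ[|{ω | ∀ m, m ≠ k → φ m + Y m ω < φ k + Y k ω}]) {ω | φ k + Y k ω ≤ x}
        = ENNReal.ofReal (Real.exp (-Real.exp (-(x - Real.log (∑ m, Real.exp (φ m)))))) := by
  intro x
  obtain ⟨n, rfl⟩ : ∃ n, M = n + 1 := Nat.exists_eq_succ_of_ne_zero k.pos.ne'
  set c := ∑ m, Real.exp (φ m - φ k)
  have hc : 0 < c := Finset.sum_pos (fun _ _ => Real.exp_pos _) Finset.univ_nonempty
  have hlog : Real.log c = Real.log (∑ m, Real.exp (φ m)) - φ k := by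
    rw [← Real.log_exp (φ k), ← Real.log_div (by positivity) (Real.exp_pos _).ne', Finset.sum_div]
    simp_rw [← Real.exp_sub, c]
  have hlaw : (ℙ : Measure Ω).map (fun ω m => Y m ω) = Measure.pi fun _ => gumbelMeasure := by
    rw [(iIndepFun_iff_map_fun_eq_pi_map fun m => (hmeas m).aemeasurable).1 hindep]
    exact congrArg Measure.pi (funext fun m => map_eq_gumbelMeasure (hmeas m) (hCDF m))
  have hjoint : ∀ s, MeasurableSet s →
      ℙ {ω | (∀ m, m ≠ k → φ m + Y m ω < φ k + Y k ω) ∧ Y k ω ∈ s}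
        = ∫⁻ y in s, ENNReal.ofReal (gumbelCDF y ^ (c - 1)) ∂gumbelMeasure := by
    intro s hs
    rw [← pi_gumbelMeasure_argmax_and_mem φ k hs, ← hlaw,
      Measure.map_apply (measurable_pi_lambda _ hmeas) (by measurability)]
    rfl
  have hargmax := hjoint univ MeasurableSet.univ
  have hmax := hjoint (Iic (x - φ k)) measurableSet_Iic
  rw [setLIntegral_univ, lintegral_gumbelCDF_rpow hc] at hargmax
  rw [setLIntegral_Iic_gumbelCDF_rpow hc] at hmax
  simp only [mem_univ, and_true] at hargmax
  simp only [mem_Iic, le_sub_iff_add_le'] at hmax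
  rw [cond_apply (by measurability), hargmax, ← ofPred_and, hmax,
    ← ENNReal.ofReal_inv_of_pos (inv_pos.2 hc), inv_inv, ← ENNReal.ofReal_mul hc.le,
    mul_div_cancel₀ _ hc.ne', gumbelCDF_rpow_eq_gumbelCDF_sub_log hc, hlog, gumbelCDF]
  ring_nf

/-- Conditioned on `argmax_m (φ m + Y m) = k`, the perturbed maximum `φ k + Y k`
has the same distribution as the unconditioned maximum: Gumbel with location
`log (∑ m, exp (φ m))`. -/
theorem gumbel_max_given_argmax {Ω : Type*} [MeasureSpace Ω]
    [IsProbabilityMeasure (ℙ : Measure Ω)]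
    {M : ℕ} (hM : 0 < M) (φ : Fin M → ℝ) (Y : Fin M → Ω → ℝ)
    (hmeas : ∀ m, Measurable (Y m))
    (hindep : iIndepFun Y ℙ)
    (hCDF : ∀ m, ∀ x : ℝ, ℙ {ω | Y m ω ≤ x} = ENNReal.ofReal (Real.exp (-Real.exp (-x))))
    (k : Fin M) :
    ∀ x : ℝ,
      (ℙ[|{ω | ∀ m, m ≠ k → φ m + Y m ω < φ k + Y k ω}]) {ω | φ k + Y k ω ≤ x}
        = ENNReal.ofReal (Real.exp (-Real.exp (-(x - Real.log (∑ m, Real.exp (φ m)))))) :=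
  gumbel_max_given_argmax_general φ Y hmeas hindep hCDF k
end

section
/- (Truncated Gumbel sampling) Let G ~ Gumbel(0,1) and b ∈ ℝ. Then the random variable -log(exp(-b) + exp(-G)) has the distribution of a standard Gumbel random variable conditioned to be at most b, i.e., its CDF is exp(-exp(-min(x,b)))/exp(-exp(-b)) for x ≤ b and 1 for x > b. -/
open MeasureTheory ProbabilityTheory Set

/-! `-log (exp (-b) + exp (-g)) ≤ x` means `exp (-x) - exp (-b) ≤ exp (-g)`. For `b ≤ x` this always
holds, so the event is sure; for `x < b` it says `g ≤ -log (exp (-x) - exp (-b))`, whose Gumbel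
probability is `exp (-(exp (-x) - exp (-b))) = exp (-exp (-x)) / exp (-exp (-b))`. -/

namespace Real

lemma neg_log_exp_neg_add_exp_neg_le_iff (b g x : ℝ) :
    -log (exp (-b) + exp (-g)) ≤ x ↔ exp (-x) - exp (-b) ≤ exp (-g) := by
  rw [neg_le, le_log_iff_exp_le (by positivity), sub_le_iff_le_add']

lemma neg_log_exp_neg_add_exp_neg_le_of_le {b x : ℝ} (hbx : b ≤ x) (g : ℝ) :
    -log (exp (-b) + exp (-g)) ≤ x := by
  rw [neg_log_exp_neg_add_exp_neg_le_iff]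
  linarith [exp_pos (-g), exp_le_exp.2 (neg_le_neg hbx)]

lemma neg_log_exp_neg_add_exp_neg_le_iff_of_lt {b x : ℝ} (hxb : x < b) (g : ℝ) :
    -log (exp (-b) + exp (-g)) ≤ x ↔ g ≤ -log (exp (-x) - exp (-b)) := by
  have hpos : 0 < exp (-x) - exp (-b) := sub_pos.2 (exp_lt_exp.2 (neg_lt_neg hxb))
  rw [neg_log_exp_neg_add_exp_neg_le_iff, ← log_le_iff_le_exp hpos, le_neg]

lemma exp_neg_exp_neg_neg_log_sub {b x : ℝ} (hxb : x < b) :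
    exp (-exp (-(-log (exp (-x) - exp (-b))))) = exp (-exp (-x)) / exp (-exp (-b)) := by
  rw [neg_neg, exp_log (sub_pos.2 (exp_lt_exp.2 (neg_lt_neg hxb))), ← exp_sub]
  ring_nf

end Real

theorem truncated_gumbel_general {Ω : Type*} [MeasureSpace Ω] [IsProbabilityMeasure (ℙ : Measure Ω)]
    (G : Ω → ℝ)
    (hCDF : ∀ x : ℝ, ℙ {ω | G ω ≤ x} = ENNReal.ofReal (Real.exp (-Real.exp (-x))))
    (b : ℝ) :
    ∀ x : ℝ,
      ℙ {ω | -Real.log (Real.exp (-b) + Real.exp (-(G ω))) ≤ x}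
        = if x ≤ b then
            ENNReal.ofReal (Real.exp (-Real.exp (-x)) / Real.exp (-Real.exp (-b)))
          else 1 := by
  intro x
  rcases lt_or_ge x b with hxb | hbx
  · simp_rw [if_pos hxb.le, Real.neg_log_exp_neg_add_exp_neg_le_iff_of_lt hxb, hCDF,
      Real.exp_neg_exp_neg_neg_log_sub hxb]
  · have hsure : {ω | -Real.log (Real.exp (-b) + Real.exp (-(G ω))) ≤ x} = univ :=
      eq_univ_of_forall fun ω => Real.neg_log_exp_neg_add_exp_neg_le_of_le hbx (G ω)
    rw [hsure, measure_univ]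
    split_ifs with hxb
    · rw [le_antisymm hxb hbx, div_self (Real.exp_ne_zero _), ENNReal.ofReal_one]
    · rfl

/-- Truncated Gumbel sampling: if `G ~ Gumbel(0,1)` and `b : ℝ`, then
`-log (exp (-b) + exp (-G))` is distributed as a standard Gumbel conditioned to
be at most `b`: its CDF is `exp (-exp (-x)) / exp (-exp (-b))` for `x ≤ b`
and `1` for `x > b`. -/
theorem truncated_gumbel {Ω : Type*} [MeasureSpace Ω] [IsProbabilityMeasure (ℙ : Measure Ω)]
    (G : Ω → ℝ) (hG : Measurable G)
    (hCDF : ∀ x : ℝ, ℙ {ω | G ω ≤ x} = ENNReal.ofReal (Real.exp (-Real.exp (-x))))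
    (b : ℝ) :
    ∀ x : ℝ,
      ℙ {ω | -Real.log (Real.exp (-b) + Real.exp (-(G ω))) ≤ x}
        = if x ≤ b then
            ENNReal.ofReal (Real.exp (-Real.exp (-x)) / Real.exp (-Real.exp (-b)))
          else 1 :=
  truncated_gumbel_general G hCDF b
end

section
/- (Counterfactual stability of Gumbel-max over two categories) Let φ, φ̃ ∈ ℝ² be original and counterfactual logits with corresponding softmax probabilities p and p̃. Suppose the observed Gumbel-max outcome under φ is category 1. If p̃₁/p₁ ≥ p̃₂/p₂, then the counterfactual outcome under φ̃ with the same Gumbel noise is almost surely also category 1. -/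
open MeasureTheory ProbabilityTheory Set

/-!
Adding the same noise to two logit vectors preserves the outcome of a pairwise comparison as soon
as the preferred category gains at least as much logit as the other one. For softmax
probabilities the ratio `p̃ₘ / pₘ` equals `exp (φ̃ₘ - φₘ)` up to a factor independent of `m`, so
the ratio hypothesis is exactly this gain condition, and the conclusion holds for every noise
realisation, not only almost surely.
-/

noncomputable section

namespace Real

variable {ι : Type*} [Fintype ι]

def softmax (φ : ι → ℝ) (i : ι) : ℝ :=
  exp (φ i) / ∑ j, exp (φ j)

theorem softmax_fin_two (φ : Fin 2 → ℝ) (m : Fin 2) :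
    softmax φ m = exp (φ m) / (exp (φ 0) + exp (φ 1)) := by
  rw [softmax, Fin.sum_univ_two]

theorem softmax_div_softmax (φ φ' : ι → ℝ) (i : ι) :
    softmax φ' i / softmax φ i = exp (φ' i - φ i) * ((∑ j, exp (φ j)) / ∑ j, exp (φ' j)) := by
  rw [softmax, softmax, exp_sub]
  field_simp

theorem softmax_div_softmax_le_iff (φ φ' : ι → ℝ) (i j : ι) :
    softmax φ' j / softmax φ j ≤ softmax φ' i / softmax φ i ↔ φ' j - φ j ≤ φ' i - φ i := by
  have hnorm : 0 < (∑ k, exp (φ k)) / ∑ k, exp (φ' k) := by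
    have : Nonempty ι := ⟨i⟩
    positivity
  rw [softmax_div_softmax, softmax_div_softmax, mul_le_mul_iff_left₀ hnorm, exp_le_exp]

end Real

end

theorem gumbel_max_counterfactual_stability_two_general {Ω : Type*} [MeasureSpace Ω]
    (φ φt : Fin 2 → ℝ) (Y : Fin 2 → Ω → ℝ)
    (p pt : Fin 2 → ℝ)
    (hp : ∀ m, p m = Real.exp (φ m) / (Real.exp (φ 0) + Real.exp (φ 1)))
    (hpt : ∀ m, pt m = Real.exp (φt m) / (Real.exp (φt 0) + Real.exp (φt 1)))
    (hratio : pt 0 / p 0 ≥ pt 1 / p 1) :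
    ∀ᵐ ω ∂(ℙ : Measure Ω),
      φ 1 + Y 1 ω < φ 0 + Y 0 ω → φt 1 + Y 1 ω < φt 0 + Y 0 ω := by
  obtain rfl : p = Real.softmax φ := funext fun m => by
    rw [hp, Real.softmax_fin_two]
  obtain rfl : pt = Real.softmax φt := funext fun m => by
    rw [hpt, Real.softmax_fin_two]
  have hgain : φt 1 - φ 1 ≤ φt 0 - φ 0 := (Real.softmax_div_softmax_le_iff φ φt 0 1).mp hratio
  exact ae_of_all _ fun ω hfactual => by linarith

/-- Counterfactual stability of Gumbel-max over two categories: if the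
softmax probability ratios satisfy `p̃₁ / p₁ ≥ p̃₂ / p₂`, then almost surely,
whenever the factual Gumbel-max outcome (under `φ`) is category 1, the
counterfactual outcome (under `φ̃`, same noise) is also category 1. -/
theorem gumbel_max_counterfactual_stability_two {Ω : Type*} [MeasureSpace Ω]
    [IsProbabilityMeasure (ℙ : Measure Ω)]
    (φ φt : Fin 2 → ℝ) (Y : Fin 2 → Ω → ℝ)
    (hmeas : ∀ m, Measurable (Y m))
    (hindep : iIndepFun Y ℙ)
    (hCDF : ∀ m, ∀ x : ℝ, ℙ {ω | Y m ω ≤ x} = ENNReal.ofReal (Real.exp (-Real.exp (-x))))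
    (p pt : Fin 2 → ℝ)
    (hp : ∀ m, p m = Real.exp (φ m) / (Real.exp (φ 0) + Real.exp (φ 1)))
    (hpt : ∀ m, pt m = Real.exp (φt m) / (Real.exp (φt 0) + Real.exp (φt 1)))
    (hratio : pt 0 / p 0 ≥ pt 1 / p 1) :
    ∀ᵐ ω ∂(ℙ : Measure Ω),
      φ 1 + Y 1 ω < φ 0 + Y 0 ω → φt 1 + Y 1 ω < φt 0 + Y 0 ω :=
  gumbel_max_counterfactual_stability_two_general φ φt Y p pt hp hpt hratio
end

section
/- Given i.i.d. standard Gumbel variables Y₁,…,Y_M and logits φ, the conditional probability that argmax = m given the maximum value equals v is exp(φ_m)/Σ_{m'} exp(φ_{m'}) for (Lebesgue-almost) every v, i.e., the conditional distribution of the argmax given the max is softmax(φ). -/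
/-!
Let `C = ∑ᵢ exp φᵢ`. Since `P(φᵢ + Yᵢ ≤ x) = exp (-(exp φᵢ · e⁻ˣ))`, independence gives
`P(max ≤ x) = exp (-(C e⁻ˣ))`. Conditionally on `Yₘ = t`, the other coordinates all stay below
`φₘ + t` with probability `exp (-(c e⁻ᵗ))`, where `c = (C - exp φₘ) · exp (-φₘ)`, and integrating
this against the Gumbel density over `φₘ + t ≤ x` gives `(exp φₘ / C) · exp (-(C e⁻ˣ))`. Hence the
law of the max restricted to `{argmax = m}` and `softmax(φ)ₘ` times the law of the max agree on
every `Iic x`, so they are equal.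
-/

open MeasureTheory ProbabilityTheory Set Filter Real

lemma hasDerivAt_exp_neg_mul_exp_neg (b x : ℝ) :
    HasDerivAt (fun t => exp (-(b * exp (-t)))) (b * exp (-x) * exp (-(b * exp (-x)))) x := by
  simpa [mul_comm] using (((hasDerivAt_neg x).exp.const_mul b).fun_neg).exp

lemma integrableOn_Iic_mul_exp_neg_mul_exp_neg {b : ℝ} (hb : 0 < b) (a : ℝ) :
    IntegrableOn (fun x => b * exp (-x) * exp (-(b * exp (-x)))) (Iic a) := by
  refine Integrable.mono' ((integrableOn_exp_Iic a).const_mul (2 / b)) (by fun_prop)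
    (.of_forall fun x => ?_)
  -- `u e⁻ᵘ ≤ 2 / u` for `u = b e⁻ˣ`, since `u² / 2 ≤ eᵘ`
  set u := b * exp (-x) with hu
  have hu_pos : 0 < u := by positivity
  have hexp_u : u ^ 2 / 2 ≤ exp u := by
    nlinarith [quadratic_le_exp_of_nonneg hu_pos.le]
  have hexp_x : exp x = b / u := by
    rw [hu, exp_neg, eq_div_iff (by positivity)]; field_simp
  rw [Real.norm_of_nonneg (by positivity), hexp_x, exp_neg, div_mul_div_cancel₀ hb.ne',
    ← div_eq_mul_inv, div_le_div_iff₀ (exp_pos u) hu_pos]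
  linarith

lemma integral_Iic_mul_exp_neg_mul_exp_neg {b : ℝ} (hb : 0 < b) (a : ℝ) :
    ∫ x in Iic a, b * exp (-x) * exp (-(b * exp (-x))) = exp (-(b * exp (-a))) := by
  rw [integral_Iic_of_hasDerivAt_of_tendsto' (fun x _ => hasDerivAt_exp_neg_mul_exp_neg b x)
    (integrableOn_Iic_mul_exp_neg_mul_exp_neg hb a), sub_zero]
  exact tendsto_exp_atBot.comp <| tendsto_neg_atTop_atBot.comp <|
    (tendsto_exp_atTop.comp tendsto_neg_atBot_atTop).const_mul_atTop hb

noncomputable def gumbelPDFReal (x : ℝ) : ℝ := exp (-x) * exp (-exp (-x))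

noncomputable def gumbelReal : Measure ℝ :=
  volume.withDensity fun x => ENNReal.ofReal (gumbelPDFReal x)

lemma gumbelReal_Iic (a : ℝ) : gumbelReal (Iic a) = ENNReal.ofReal (exp (-exp (-a))) := by
  have hint := integrableOn_Iic_mul_exp_neg_mul_exp_neg one_pos a
  have h := integral_Iic_mul_exp_neg_mul_exp_neg one_pos a
  simp only [one_mul] at hint h
  rw [gumbelReal, withDensity_apply _ measurableSet_Iic, ← h,
    ofReal_integral_eq_lintegral_ofReal hint (.of_forall fun x => by positivity)]
  rfl

lemma gumbelReal_Iio (a : ℝ) : gumbelReal (Iio a) = gumbelReal (Iic a) := by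
  rw [gumbelReal, withDensity_apply _ measurableSet_Iio,
    withDensity_apply _ measurableSet_Iic, setLIntegral_congr Iio_ae_eq_Iic]

lemma gumbelReal_Iic_sub (x c : ℝ) :
    gumbelReal (Iic (x - c)) = ENNReal.ofReal (exp (-(exp c * exp (-x)))) := by
  rw [gumbelReal_Iic, neg_sub, sub_eq_add_neg, exp_add]

instance : IsProbabilityMeasure gumbelReal := by
  refine ⟨tendsto_nhds_unique (tendsto_measure_Iic_atTop gumbelReal) ?_⟩
  simp only [gumbelReal_Iic]
  have h : Tendsto (fun a : ℝ => -exp (-a)) atTop (nhds 0) := by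
    simpa using (tendsto_exp_atBot.comp tendsto_neg_atTop_atBot).neg
  replace h : Tendsto (fun a : ℝ => exp (-exp (-a))) atTop (nhds 1) := by
    simpa [Function.comp_def] using (continuous_exp.tendsto 0).comp h
  simpa using (ENNReal.tendsto_ofReal h)

lemma map_eq_gumbelReal {Ω : Type*} [MeasurableSpace Ω] {μ : Measure Ω} [IsFiniteMeasure μ]
    {X : Ω → ℝ} (hX : Measurable X)
    (hcdf : ∀ x, μ {ω | X ω ≤ x} = ENNReal.ofReal (exp (-exp (-x)))) :
    μ.map X = gumbelReal :=
  Measure.ext_of_Iic _ _ fun a => by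
    rw [Measure.map_apply hX measurableSet_Iic, gumbelReal_Iic]
    exact hcdf a

lemma setLIntegral_Iic_gumbelReal {c : ℝ} (hc : 0 ≤ c) (a : ℝ) :
    ∫⁻ t in Iic a, ENNReal.ofReal (exp (-(c * exp (-t)))) ∂gumbelReal
      = ENNReal.ofReal (exp (-((1 + c) * exp (-a))) / (1 + c)) := by
  have hc' : 0 < 1 + c := by linarith
  have hdensity : ∀ t, ENNReal.ofReal (gumbelPDFReal t) * ENNReal.ofReal (exp (-(c * exp (-t))))
      = ENNReal.ofReal ((1 + c)⁻¹ * ((1 + c) * exp (-t) * exp (-((1 + c) * exp (-t))))) := by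
    intro t
    rw [gumbelPDFReal, ← ENNReal.ofReal_mul (by positivity)]
    congr 1
    rw [add_mul, one_mul, neg_add, exp_add]
    field_simp
  rw [gumbelReal, restrict_withDensity measurableSet_Iic,
    lintegral_withDensity_eq_lintegral_mul _ (by unfold gumbelPDFReal; fun_prop) (by fun_prop)]
  simp only [Pi.mul_apply, hdensity]
  rw [← ofReal_integral_eq_lintegral_ofReal
      ((integrableOn_Iic_mul_exp_neg_mul_exp_neg hc' a).const_mul _)
      (.of_forall fun t => by positivity),
    integral_const_mul, integral_Iic_mul_exp_neg_mul_exp_neg hc' a, inv_mul_eq_div]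

section Product

variable {ι : Type*} [Fintype ι]

lemma prod_ofReal_exp_neg_exp_mul (φ : ι → ℝ) (u : ℝ) :
    ∏ i, ENNReal.ofReal (exp (-(exp (φ i) * u)))
      = ENNReal.ofReal (exp (-((∑ i, exp (φ i)) * u))) := by
  rw [← ENNReal.ofReal_prod_of_nonneg fun i _ => (exp_nonneg _), ← exp_sum, Finset.sum_mul,
    ← Finset.sum_neg_distrib]

lemma pi_gumbelReal_forall_add_le (φ : ι → ℝ) (x : ℝ) :
    Measure.pi (fun _ : ι => gumbelReal) {y | ∀ i, φ i + y i ≤ x}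
      = ENNReal.ofReal (exp (-((∑ i, exp (φ i)) * exp (-x)))) := by
  have h : {y : ι → ℝ | ∀ i, φ i + y i ≤ x} = univ.pi fun i => Iic (x - φ i) := by
    ext y
    simp only [mem_ofPred_eq, Set.mem_pi, mem_univ, forall_const, mem_Iic, le_sub_iff_add_le']
  rw [h, Measure.pi_pi]
  simp only [gumbelReal_Iic_sub, prod_ofReal_exp_neg_exp_mul]

lemma pi_gumbelReal_forall_add_lt (φ : ι → ℝ) (x : ℝ) :
    Measure.pi (fun _ : ι => gumbelReal) {y | ∀ i, φ i + y i < x}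
      = ENNReal.ofReal (exp (-((∑ i, exp (φ i)) * exp (-x)))) := by
  have h : {y : ι → ℝ | ∀ i, φ i + y i < x} = univ.pi fun i => Iio (x - φ i) := by
    ext y
    simp only [mem_ofPred_eq, Set.mem_pi, mem_univ, forall_const, mem_Iio, lt_sub_iff_add_lt']
  rw [h, Measure.pi_pi]
  simp only [gumbelReal_Iio, gumbelReal_Iic_sub, prod_ofReal_exp_neg_exp_mul]

lemma measurable_iSup_add (φ : ι → ℝ) : Measurable fun y : ι → ℝ => ⨆ i, φ i + y i :=
  .iSup fun i => (measurable_pi_apply i).const_add _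

lemma measurableSet_forall_add_lt_add (φ : ι → ℝ) (m : ι) :
    MeasurableSet {y : ι → ℝ | ∀ i, i ≠ m → φ i + y i < φ m + y m} := by
  measurability

lemma iSup_add_le_iff [Nonempty ι] (φ y : ι → ℝ) (x : ℝ) :
    ⨆ i, φ i + y i ≤ x ↔ ∀ i, φ i + y i ≤ x :=
  ciSup_le_iff (Finite.bddAbove_range _)

end Product

lemma pi_gumbelReal_argmax_and_add_le {N : ℕ} (φ : Fin (N + 1) → ℝ) (m : Fin (N + 1)) (x : ℝ) :
    Measure.pi (fun _ => gumbelReal)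
        {y | (∀ i, i ≠ m → φ i + y i < φ m + y m) ∧ φ m + y m ≤ x}
      = ENNReal.ofReal (exp (φ m) / (∑ i, exp (φ i)) * exp (-((∑ i, exp (φ i)) * exp (-x)))) := by
  set C := ∑ i, exp (φ i)
  have hC : C = exp (φ m) + ∑ j, exp (φ (m.succAbove j)) := Fin.sum_univ_succAbove _ m
  set c := (∑ j, exp (φ (m.succAbove j))) * exp (-φ m)
  have hc : 0 ≤ c := by positivity
  have hothers : ∀ t, Measure.pi (fun _ : Fin N => gumbelReal)
      {r | ∀ j, φ (m.succAbove j) + r j < φ m + t} = ENNReal.ofReal (exp (-(c * exp (-t)))) := by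
    intro t
    rw [pi_gumbelReal_forall_add_lt, neg_add, exp_add, ← mul_assoc]
  let B : Set (ℝ × (Fin N → ℝ)) :=
    {p | (∀ j, φ (m.succAbove j) + p.2 j < φ m + p.1) ∧ φ m + p.1 ≤ x}
  have hB : MeasurableSet B := by measurability
  have hpre : {y : Fin (N + 1) → ℝ | (∀ i, i ≠ m → φ i + y i < φ m + y m) ∧ φ m + y m ≤ x}
      = MeasurableEquiv.piFinSuccAbove (fun _ => ℝ) m ⁻¹' B := by
    ext y
    simp [B, Fin.forall_iff_succAbove m, Fin.removeNth, Fin.succAbove_ne]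
  rw [hpre, (measurePreserving_piFinSuccAbove (fun _ => gumbelReal) m).measure_preimage
    hB.nullMeasurableSet, Measure.prod_apply hB]
  calc ∫⁻ t, Measure.pi (fun _ => gumbelReal) (Prod.mk t ⁻¹' B) ∂gumbelReal
      = ∫⁻ t in Iic (x - φ m), ENNReal.ofReal (exp (-(c * exp (-t)))) ∂gumbelReal := by
        rw [← lintegral_indicator measurableSet_Iic]
        congr 1 with t
        by_cases ht : φ m + t ≤ x
        · rw [indicator_of_mem (by rw [mem_Iic]; linarith), ← hothers]
          congr 1 with r
          simp [B, ht]
        · rw [indicator_of_notMem (by rw [mem_Iic]; linarith)]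
          simp [B, ht]
    _ = ENNReal.ofReal (exp (-((1 + c) * exp (-(x - φ m)))) / (1 + c)) :=
        setLIntegral_Iic_gumbelReal hc _
    _ = _ := by
        have he : exp (φ m) * exp (-φ m) = 1 := by rw [← exp_add, add_neg_cancel, exp_zero]
        have hsum : 1 + c = C * exp (-φ m) := by rw [hC, add_mul, he]
        have hx : C * exp (-φ m) * exp (-(x - φ m)) = C * exp (-x) := by
          rw [neg_sub, sub_eq_add_neg, exp_add]
          linear_combination (C * exp (-x)) * he
        rw [hsum, hx, exp_neg (φ m)]
        field_simp

theorem pi_gumbelReal_argmax_inter_iSup_add_mem {M : ℕ} (φ : Fin M → ℝ) (m : Fin M)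
    {s : Set ℝ} (hs : MeasurableSet s) :
    Measure.pi (fun _ => gumbelReal)
        ({y | ∀ i, i ≠ m → φ i + y i < φ m + y m} ∩ {y | (⨆ i, φ i + y i) ∈ s})
      = ENNReal.ofReal (exp (φ m) / ∑ i, exp (φ i))
          * Measure.pi (fun _ => gumbelReal) {y | (⨆ i, φ i + y i) ∈ s} := by
  obtain ⟨N, rfl⟩ := Nat.exists_eq_add_one_of_ne_zero m.pos.ne'
  set ν := Measure.pi fun _ : Fin (N + 1) => gumbelReal
  set A := {y : Fin (N + 1) → ℝ | ∀ i, i ≠ m → φ i + y i < φ m + y m}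
  have hV := measurable_iSup_add φ
  have hlaw : (ν.restrict A).map (fun y => ⨆ i, φ i + y i)
      = ENNReal.ofReal (exp (φ m) / ∑ i, exp (φ i)) • ν.map (fun y => ⨆ i, φ i + y i) := by
    refine Measure.ext_of_Iic _ _ fun x => ?_
    have hmax : (fun y => ⨆ i, φ i + y i) ⁻¹' Iic x
        = {y : Fin (N + 1) → ℝ | ∀ i, φ i + y i ≤ x} := by
      ext y
      exact iSup_add_le_iff φ y x
    have hargmax : A ∩ {y : Fin (N + 1) → ℝ | ∀ i, φ i + y i ≤ x}
        = {y | (∀ i, i ≠ m → φ i + y i < φ m + y m) ∧ φ m + y m ≤ x} := by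
      ext y
      exact and_congr_right fun hm =>
        ⟨fun h => h m, fun h i => (eq_or_ne i m).elim (· ▸ h) fun hi => (hm i hi).le.trans h⟩
    rw [Measure.map_apply hV measurableSet_Iic, Measure.smul_apply,
      Measure.map_apply hV measurableSet_Iic, smul_eq_mul,
      Measure.restrict_apply' (measurableSet_forall_add_lt_add φ m), inter_comm, hmax, hargmax,
      pi_gumbelReal_argmax_and_add_le, pi_gumbelReal_forall_add_le,
      ENNReal.ofReal_mul (by positivity)]
  have h := congrArg (· s) hlaw
  rwa [Measure.map_apply hV hs, Measure.restrict_apply (hV hs), inter_comm, Measure.smul_apply,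
    Measure.map_apply hV hs, smul_eq_mul] at h

theorem gumbel_argmax_given_max_general {Ω : Type*} [MeasureSpace Ω]
    [IsProbabilityMeasure (ℙ : Measure Ω)]
    {M : ℕ} (φ : Fin M → ℝ) (Y : Fin M → Ω → ℝ)
    (hmeas : ∀ m, Measurable (Y m))
    (hindep : iIndepFun Y ℙ)
    (hCDF : ∀ m, ∀ x : ℝ, ℙ {ω | Y m ω ≤ x} = ENNReal.ofReal (Real.exp (-Real.exp (-x)))) :
    ∀ (m : Fin M) (s : Set ℝ), MeasurableSet s →
      ℙ ({ω | ∀ m', m' ≠ m → φ m' + Y m' ω < φ m + Y m ω}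
          ∩ {ω | (⨆ m', φ m' + Y m' ω) ∈ s})
        = ENNReal.ofReal (Real.exp (φ m) / ∑ m', Real.exp (φ m'))
          * ℙ {ω | (⨆ m', φ m' + Y m' ω) ∈ s} := by
  intro m s hs
  have hY : Measurable fun ω i => Y i ω := measurable_pi_lambda _ hmeas
  have hlaw : (ℙ : Measure Ω).map (fun ω i => Y i ω) = Measure.pi fun _ => gumbelReal := by
    rw [hindep.map_fun_eq_pi_map fun i => (hmeas i).aemeasurable]
    exact congrArg Measure.pi (funext fun i => map_eq_gumbelReal (hmeas i) (hCDF i))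
  have h := pi_gumbelReal_argmax_inter_iSup_add_mem φ m hs
  rw [← hlaw, Measure.map_apply hY, Measure.map_apply hY] at h
  exacts [h, measurable_iSup_add φ hs,
    (measurableSet_forall_add_lt_add φ m).inter (measurable_iSup_add φ hs)]

/-- The conditional distribution of the argmax given the max is `softmax φ`:
for every category `m` and every measurable set `s` of values of the max,
`P(argmax = m, max ∈ s) = softmax(φ)_m · P(max ∈ s)`, i.e. the conditional
probability that the argmax is `m` given the max equals
`exp (φ m) / ∑ m', exp (φ m')` almost everywhere. -/
theorem gumbel_argmax_given_max {Ω : Type*} [MeasureSpace Ω]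
    [IsProbabilityMeasure (ℙ : Measure Ω)]
    {M : ℕ} (hM : 0 < M) (φ : Fin M → ℝ) (Y : Fin M → Ω → ℝ)
    (hmeas : ∀ m, Measurable (Y m))
    (hindep : iIndepFun Y ℙ)
    (hCDF : ∀ m, ∀ x : ℝ, ℙ {ω | Y m ω ≤ x} = ENNReal.ofReal (Real.exp (-Real.exp (-x)))) :
    ∀ (m : Fin M) (s : Set ℝ), MeasurableSet s →
      ℙ ({ω | ∀ m', m' ≠ m → φ m' + Y m' ω < φ m + Y m ω}
          ∩ {ω | (⨆ m', φ m' + Y m' ω) ∈ s})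
        = ENNReal.ofReal (Real.exp (φ m) / ∑ m', Real.exp (φ m'))
          * ℙ {ω | (⨆ m', φ m' + Y m' ω) ∈ s} :=
  gumbel_argmax_given_max_general φ Y hmeas hindep hCDF
end
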